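/- Let x, y ∈ Γ_Fib be consecutive points, i.e. x < y and (x, y) ∩ Γ_Fib = ∅. Then y − x = 1 + φ or y − x = 1 + 2φ. -/
import Mathlib


noncomputable section

/-- The golden ratio `φ = (1+√5)/2`. -/
def phi : ℝ := (1 + Real.sqrt 5) / 2

/-- The "physical space" projection `p(v) = v₁ + φ v₂`. -/
def pF (v : ℤ × ℤ) : ℝ := (v.1 : ℝ) + phi * (v.2 : ℝ)

/-- The "internal space" projection `κ(v) = -φ v₁ + v₂`. -/
def kF (v : ℤ × ℤ) : ℝ := -phi * (v.1 : ℝ) + (v.2 : ℝ)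

/-- The Fibonacci quasicrystal `Γ_Fib = { p(z) : z ∈ ℤ², κ(z) ∈ [0,1) }`. -/
def FibSet : Set ℝ := { x | ∃ z : ℤ × ℤ, kF z ∈ Set.Ico (0 : ℝ) 1 ∧ pF z = x }

lemma phi_gt_one : (1 : ℝ) < phi := by
  have h5 : (2 : ℝ) < Real.sqrt 5 := by
    have := Real.sq_sqrt (by norm_num : (5:ℝ) ≥ 0)
    nlinarith [Real.sqrt_nonneg 5]
  unfold phi; linarith

lemma phi_lt_two : phi < 2 := by
  have h5 : Real.sqrt 5 < 3 := by
    have := Real.sq_sqrt (by norm_num : (5:ℝ) ≥ 0)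
    nlinarith [Real.sqrt_nonneg 5]
  unfold phi; linarith

/-- The point of the quasicrystal indexed by `m`. -/
def fFib (m : ℤ) : ℝ := (m : ℝ) + phi * (⌈phi * m⌉ : ℝ)

lemma mem_FibSet_iff (x : ℝ) : x ∈ FibSet ↔ ∃ m : ℤ, fFib m = x := by
  constructor
  · rintro ⟨⟨m, n⟩, ⟨h0, h1⟩, hp⟩
    refine ⟨m, ?_⟩
    have hceil : ⌈phi * m⌉ = n := by
      rw [Int.ceil_eq_iff]
      constructor
      · simp only [kF] at h1; push_cast; linarith
      · simp only [kF] at h0; linarith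
    simp only [fFib, hceil]
    simpa [pF] using hp
  · rintro ⟨m, rfl⟩
    refine ⟨(m, ⌈phi * m⌉), ⟨?_, ?_⟩, rfl⟩
    · simp only [kF]
      have := Int.le_ceil (phi * m)
      linarith
    · simp only [kF]
      have := Int.ceil_lt_add_one (phi * m)
      linarith

lemma fFib_step (m : ℤ) :
    fFib (m + 1) - fFib m = 1 + phi ∨ fFib (m + 1) - fFib m = 1 + 2 * phi := by
  have key : ⌈phi * (m + 1 : ℤ)⌉ = ⌈phi * m⌉ + 1 ∨ ⌈phi * (m + 1 : ℤ)⌉ = ⌈phi * m⌉ + 2 := by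
    have hlo : ⌈phi * m⌉ + 1 ≤ ⌈phi * (m + 1 : ℤ)⌉ := by
      have : ⌈phi * m + 1⌉ ≤ ⌈phi * (m + 1 : ℤ)⌉ := by
        apply Int.ceil_le_ceil
        push_cast
        nlinarith [phi_gt_one]
      simpa using this
    have hhi : ⌈phi * (m + 1 : ℤ)⌉ ≤ ⌈phi * m⌉ + 2 := by
      have : ⌈phi * (m + 1 : ℤ)⌉ ≤ ⌈phi * m + 2⌉ := by
        apply Int.ceil_le_ceil
        push_cast
        nlinarith [phi_lt_two]
      simpa using this
    omega
  rcases key with h | h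
  · left
    simp only [fFib, h]
    push_cast
    ring
  · right
    simp only [fFib, h]
    push_cast
    ring

lemma fFib_lt_succ (m : ℤ) : fFib m < fFib (m + 1) := by
  have h1 : (0:ℝ) < phi := by linarith [phi_gt_one]
  rcases fFib_step m with h | h <;> linarith

lemma fFib_strictMono : StrictMono fFib :=
  strictMono_int_of_lt_succ fFib_lt_succ

/-- Consecutive points of the Fibonacci quasicrystal are at distance `1 + φ` ("short")
or `1 + 2φ` ("long"). -/
theorem fib_consecutive_gaps (x y : ℝ) (hx : x ∈ FibSet) (hy : y ∈ FibSet)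
    (hxy : x < y) (hcons : Set.Ioo x y ∩ FibSet = ∅) :
    y - x = 1 + phi ∨ y - x = 1 + 2 * phi := by
  obtain ⟨a, rfl⟩ := (mem_FibSet_iff x).1 hx
  obtain ⟨b, rfl⟩ := (mem_FibSet_iff y).1 hy
  have hab : a < b := fFib_strictMono.lt_iff_lt.1 hxy
  have hb : b = a + 1 := by
    by_contra h
    have h2 : a + 1 < b := by omega
    have hmid : fFib (a + 1) ∈ Set.Ioo (fFib a) (fFib b) :=
      ⟨fFib_lt_succ a, fFib_strictMono h2⟩
    have hmem : fFib (a + 1) ∈ FibSet := (mem_FibSet_iff _).2 ⟨a + 1, rfl⟩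
    have : fFib (a + 1) ∈ Set.Ioo (fFib a) (fFib b) ∩ FibSet := ⟨hmid, hmem⟩
    rw [hcons] at this
    exact this
  subst hb
  exact fFib_step a

end
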